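/- Let n ≥ 1, let G be an n×n positive semidefinite complex matrix, and let a, b be real numbers such that a·x + b·x² ≤ √x for all real x ≥ 0. Then for every index i, the (real, nonnegative) diagonal entry of the positive semidefinite square root satisfies (√G)_{ii} ≥ a·G_{ii} + b·∑_{j=1}^{n} |G_{ij}|². -/

import Mathlib

open Matrix
open scoped ComplexOrder

/-- The positive semidefinite square root, as `Matrix.PosSemidef.sqrt` was defined in Mathlib (Dec 2024). -/
noncomputable def Matrix.PosSemidef.sqrt {n 𝕜 : Type*} [Fintype n] [DecidableEq n] [RCLike 𝕜]
    {A : Matrix n n 𝕜} (hA : PosSemidef A) : Matrix n n 𝕜 :=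
  hA.1.eigenvectorUnitary.1 * diagonal ((↑) ∘ Real.sqrt ∘ hA.1.eigenvalues) *
    (star hA.1.eigenvectorUnitary : Matrix n n 𝕜)

/-!
Write `G = U D U*` with `U` unitary and `D = diag(λ)`, `λ ≥ 0`. With the weights
`w_k = |U_{ik}|² ≥ 0`, the three quantities in the inequality are averages against `w`:
`G_{ii} = ∑ λ_k w_k`, `∑_j |G_{ij}|² = (G²)_{ii} = ∑ λ_k² w_k` and `(√G)_{ii} = ∑ √λ_k w_k`.
The hypothesis `a x + b x² ≤ √x`, applied at each `x = λ_k` and summed against `w`, gives the claim.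
-/

namespace Matrix

variable {n 𝕜 : Type*} [Fintype n] [RCLike 𝕜]

theorem IsHermitian.sum_norm_sq_apply {A : Matrix n n 𝕜} (hA : A.IsHermitian) (i : n) :
    ∑ j, ‖A i j‖ ^ 2 = RCLike.re ((A * A) i i) := by
  rw [mul_apply, map_sum]
  refine Finset.sum_congr rfl fun j _ => ?_
  rw [← hA.apply j i, RCLike.star_def, RCLike.mul_conj, ← RCLike.ofReal_pow, RCLike.ofReal_re]

variable [DecidableEq n]

theorem re_mul_diagonal_mul_star_apply_self (U : Matrix n n 𝕜) (d : n → ℝ) (i : n) :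
    RCLike.re ((U * diagonal (RCLike.ofReal ∘ d) * star U : Matrix n n 𝕜) i i) =
      ∑ k, d k * ‖U i k‖ ^ 2 := by
  rw [mul_apply, map_sum]
  refine Finset.sum_congr rfl fun k _ => ?_
  rw [mul_diagonal, star_apply, Function.comp_apply, RCLike.star_def, mul_comm (U i k),
    mul_assoc, RCLike.mul_conj, ← RCLike.ofReal_pow, ← RCLike.ofReal_mul, RCLike.ofReal_re]

namespace IsHermitian

variable {A : Matrix n n 𝕜} (hA : A.IsHermitian)

local notation "U" => (hA.eigenvectorUnitary : Matrix n n 𝕜)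

theorem re_apply_self_eq_sum_eigenvalues (i : n) :
    RCLike.re (A i i) = ∑ k, hA.eigenvalues k * ‖U i k‖ ^ 2 := by
  conv_lhs => rw [hA.spectral_theorem]
  exact re_mul_diagonal_mul_star_apply_self _ _ i

theorem sum_norm_sq_apply_eq_sum_eigenvalues_sq (i : n) :
    ∑ j, ‖A i j‖ ^ 2 = ∑ k, hA.eigenvalues k ^ 2 * ‖U i k‖ ^ 2 := by
  have hsq : A * A = U * diagonal (RCLike.ofReal ∘ fun k => hA.eigenvalues k ^ 2) * star U := by
    conv_lhs => rw [hA.spectral_theorem, ← map_mul, diagonal_mul_diagonal]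
    simp [sq, Function.comp_def]
  rw [hA.sum_norm_sq_apply, hsq, re_mul_diagonal_mul_star_apply_self]

end IsHermitian

theorem PosSemidef.re_sqrt_apply_self {A : Matrix n n 𝕜} (hA : A.PosSemidef) (i : n) :
    RCLike.re (hA.sqrt i i) =
      ∑ k, √(hA.1.eigenvalues k) * ‖(hA.1.eigenvectorUnitary : Matrix n n 𝕜) i k‖ ^ 2 :=
  re_mul_diagonal_mul_star_apply_self _ _ i

end Matrix

theorem stmt_0_general (n : ℕ) (G : Matrix (Fin n) (Fin n) ℂ) (hG : G.PosSemidef)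
    (a b : ℝ) (hab : ∀ x : ℝ, 0 ≤ x → a * x + b * x ^ 2 ≤ Real.sqrt x) (i : Fin n) :
    a * (G i i).re + b * ∑ j, ‖G i j‖ ^ 2 ≤ (hG.sqrt i i).re := by
  simp only [← RCLike.re_to_complex]
  rw [hG.re_sqrt_apply_self, hG.1.re_apply_self_eq_sum_eigenvalues,
    hG.1.sum_norm_sq_apply_eq_sum_eigenvalues_sq, Finset.mul_sum, Finset.mul_sum,
    ← Finset.sum_add_distrib]
  gcongr with k
  calc _ = (a * hG.1.eigenvalues k + b * hG.1.eigenvalues k ^ 2) *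
        ‖(hG.1.eigenvectorUnitary : Matrix (Fin n) (Fin n) ℂ) i k‖ ^ 2 := by ring
    _ ≤ _ := by gcongr; exact hab _ (hG.eigenvalues_nonneg k)

theorem stmt_0 (n : ℕ) (hn : 1 ≤ n) (G : Matrix (Fin n) (Fin n) ℂ) (hG : G.PosSemidef)
    (a b : ℝ) (hab : ∀ x : ℝ, 0 ≤ x → a * x + b * x ^ 2 ≤ Real.sqrt x) (i : Fin n) :
    a * (G i i).re + b * ∑ j, ‖G i j‖ ^ 2 ≤ (hG.sqrt i i).re :=
  stmt_0_general n G hG a b hab i
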